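/- Event-triggered positive invariance with state-error threshold (Corollary 3): consider the closed-loop system x_{t+1} = (A + BK) x_t + BK e_t + E w_t, where the event-trigger guarantees ‖e_t‖ ≤ σ₃ for all t. Assume the spectral norm ‖A + BK‖ < 1, Σ_w is positive semidefinite, and suppose r² > (1/(1 − ‖A+BK‖)²)·(1/ε)·Tr(Σ_w Eᵀ E) and 0 ≤ σ₃ ≤ (1/‖BK‖)·( (1 − ‖A+BK‖)·r − √((1/ε)·Tr(Σ_w Eᵀ E)) ). Then the ball D = {x : ‖x‖² ≤ r²} is worst-case CVaR positively invariant: for every x with ‖x‖² ≤ r², every k ≥ 1, and every error sequence with ‖e_τ‖ ≤ σ₃: sup_{P ∈ M_k} CVaR_ε^P[ ‖(A+BK)^k x + Σ_{j=0}^{k−1} (A+BK)^j (BK e_{k−1−j} + E w_{k−1−j})‖² − r² ] ≤ 0. -/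

import Mathlib

open MeasureTheory Matrix Kronecker

/-- Spectral norm (largest singular value) of a real matrix, as the operator norm of the
induced map between Euclidean spaces. -/
noncomputable def specNorm {m n : Type*} [Fintype m] [Fintype n] [DecidableEq n]
    (A : Matrix m n ℝ) : ℝ :=
  ‖LinearMap.toContinuousLinearMap (Matrix.toEuclideanLin A)‖

/-- Conditional value-at-risk at level `ε` of the loss `L` under the measure `P`:
`CVaR_ε^P[L] = inf_β ( β + (1/ε) E_P[max (L ξ - β) 0] )`. -/
noncomputable def CVaR {ι : Type*} [Fintype ι] (ε : ℝ)
    (P : Measure (EuclideanSpace ℝ ι)) (L : EuclideanSpace ℝ ι → ℝ) : ℝ :=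
  ⨅ β : ℝ, (β + ε⁻¹ * ∫ ξ, max (L ξ - β) 0 ∂P)

/-- The set `M(S)` of Borel probability measures with zero mean and covariance `S`. -/
def MomentSet {ι : Type*} [Fintype ι] (S : Matrix ι ι ℝ) :
    Set (Measure (EuclideanSpace ℝ ι)) :=
  {P | IsProbabilityMeasure P ∧
       (∀ i, Integrable (fun ξ => ξ i) P) ∧
       (∀ i, ∫ ξ, ξ i ∂P = 0) ∧
       (∀ i j, Integrable (fun ξ => ξ i * ξ j) P) ∧
       (∀ i j, ∫ ξ, ξ i * ξ j ∂P = S i j)}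

/-- Worst-case CVaR over the moment set `M(S)`. -/
noncomputable def wcCVaR {ι : Type*} [Fintype ι] (ε : ℝ) (S : Matrix ι ι ℝ)
    (L : EuclideanSpace ℝ ι → ℝ) : ℝ :=
  ⨆ P : MomentSet S, CVaR ε (P : Measure (EuclideanSpace ℝ ι)) L

/-- The block matrix `H_t = [A^(t-1) E, A^(t-2) E, ..., E]`, viewed as a matrix acting on the
stacked disturbance vector `w̄_t = (w_0, ..., w_(t-1))` (indexed by `Fin t × Fin nw`),
so that `H_t w̄_t = Σ_k A^(t-1-k) E w_k`. -/
noncomputable def Hmat {nx nw : ℕ} (A : Matrix (Fin nx) (Fin nx) ℝ)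
    (E : Matrix (Fin nx) (Fin nw) ℝ) (t : ℕ) :
    Matrix (Fin nx) (Fin t × Fin nw) ℝ :=
  Matrix.of fun i p => (A ^ (t - 1 - (p.1 : ℕ)) * E) i p.2

/-! The loss is `‖c + H w̄‖² - r²`, where `c` collects the free response and the error terms,
`‖c‖ ≤ a := ρᵏ |r| + ‖BK‖ σ₃ G` with `ρ = ‖A + BK‖` and `G = Σ_{j<k} ρʲ`. By Cauchy–Schwarz,
`‖H w̄‖² ≤ G Σ_j ρ^(k-1-j) ‖E w_j‖²`, so `E ‖H w̄‖² ≤ G² Tr(Σ_w EᵀE)` for every distribution in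
`M_k`. For any `Y`, `CVaR_ε[(a + Y)²] ≤ (a + √(E[Y²] / ε))²`: with `β = a² + a²/t` the excess
over `β` is at most `(1 + t) Y²` (AM–GM), and then one optimises over `t > 0`. The threshold on
`σ₃` is exactly what gives `a + G √(Tr(Σ_w EᵀE) / ε) ≤ |r|`, using `G (1 - ρ) = 1 - ρᵏ`. -/

open Finset
open scoped Matrix.Norms.L2Operator

section SpecNorm

variable {l m n : Type*} [Fintype l] [Fintype m] [Fintype n] [DecidableEq l] [DecidableEq n]

theorem specNorm_nonneg (A : Matrix m n ℝ) : 0 ≤ specNorm A := norm_nonneg _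

theorem norm_toEuclideanLin_apply_le (A : Matrix m n ℝ) (v : EuclideanSpace ℝ n) :
    ‖toEuclideanLin A v‖ ≤ specNorm A * ‖v‖ :=
  (LinearMap.toContinuousLinearMap (toEuclideanLin A)).le_opNorm v

theorem specNorm_mul_le (A : Matrix m n ℝ) (B : Matrix n l ℝ) :
    specNorm (A * B) ≤ specNorm A * specNorm B :=
  l2_opNorm_mul A B

theorem specNorm_one_le : specNorm (1 : Matrix n n ℝ) ≤ 1 := by
  rw [specNorm, toLpLin_one]
  exact ContinuousLinearMap.norm_id_le

theorem specNorm_pow_le (A : Matrix n n ℝ) (j : ℕ) : specNorm (A ^ j) ≤ specNorm A ^ j := by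
  induction j with
  | zero => simpa using specNorm_one_le
  | succ j ih =>
    rw [pow_succ, pow_succ]
    exact (specNorm_mul_le _ _).trans (by gcongr; exact specNorm_nonneg _)

end SpecNorm

theorem norm_pow_apply_add_sum_le {m n : Type*} [Fintype m] [Fintype n] [DecidableEq m]
    [DecidableEq n] (A : Matrix n n ℝ) (M : Matrix n m ℝ) (x : EuclideanSpace ℝ n)
    (e : ℕ → EuclideanSpace ℝ m) {σ : ℝ} (he : ∀ τ, ‖e τ‖ ≤ σ) (k : ℕ) :
    ‖toEuclideanLin (A ^ k) x + ∑ j ∈ range k, toEuclideanLin (A ^ j * M) (e (k - 1 - j))‖ ≤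
      specNorm A ^ k * ‖x‖ + specNorm M * σ * ∑ j ∈ range k, specNorm A ^ j := by
  have hσ : 0 ≤ σ := (norm_nonneg _).trans (he 0)
  have hterm (j : ℕ) : ‖toEuclideanLin (A ^ j * M) (e (k - 1 - j))‖ ≤
      specNorm M * σ * specNorm A ^ j :=
    calc _ ≤ specNorm (A ^ j * M) * σ :=
          (norm_toEuclideanLin_apply_le _ _).trans (by gcongr; exacts [specNorm_nonneg _, he _])
      _ ≤ specNorm A ^ j * specNorm M * σ := by
          gcongr
          exact (specNorm_mul_le _ _).trans
            (by gcongr; exacts [specNorm_nonneg _, specNorm_pow_le A j])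
      _ = specNorm M * σ * specNorm A ^ j := by ring
  calc _ ≤ ‖toEuclideanLin (A ^ k) x‖ +
        ∑ j ∈ range k, ‖toEuclideanLin (A ^ j * M) (e (k - 1 - j))‖ :=
        (norm_add_le _ _).trans (by gcongr; exact norm_sum_le _ _)
    _ ≤ _ := by
      rw [mul_sum]
      gcongr with j
      · exact (norm_toEuclideanLin_apply_le _ _).trans (by gcongr; exact specNorm_pow_le A k)
      · exact hterm j

/-- The `j`-th block `w_j` of a stacked vector `w̄ = (w_0, …, w_(k-1))`. -/
def unstack {κ ι : Type*} (w : EuclideanSpace ℝ (κ × ι)) (j : κ) : EuclideanSpace ℝ ι :=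
  WithLp.toLp 2 fun p => w (j, p)

theorem toEuclideanLin_Hmat_apply {nx nw : ℕ} (A : Matrix (Fin nx) (Fin nx) ℝ)
    (E : Matrix (Fin nx) (Fin nw) ℝ) (k : ℕ) (w : EuclideanSpace ℝ (Fin k × Fin nw)) :
    toEuclideanLin (Hmat A E k) w =
      ∑ j : Fin k, toEuclideanLin (A ^ (k - 1 - (j : ℕ)) * E) (unstack w j) := by
  ext i
  simp only [toLpLin_apply, WithLp.ofLp_sum, Finset.sum_apply, mulVec, dotProduct,
    Fintype.sum_prod_type, Hmat, of_apply, unstack]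

theorem Fin.sum_sub_one_sub_eq_sum_range {M : Type*} [AddCommMonoid M] (f : ℕ → M) (k : ℕ) :
    ∑ j : Fin k, f (k - 1 - (j : ℕ)) = ∑ j ∈ range k, f j := by
  rw [Fin.sum_univ_eq_sum_range (fun j => f (k - 1 - j)), sum_range_reflect]

theorem sq_norm_toEuclideanLin_Hmat_apply_le {nx nw : ℕ} (A : Matrix (Fin nx) (Fin nx) ℝ)
    (E : Matrix (Fin nx) (Fin nw) ℝ) (k : ℕ) (w : EuclideanSpace ℝ (Fin k × Fin nw)) :
    ‖toEuclideanLin (Hmat A E k) w‖ ^ 2 ≤ (∑ j ∈ range k, specNorm A ^ j) *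
      ∑ j : Fin k, specNorm A ^ (k - 1 - (j : ℕ)) * ‖toEuclideanLin E (unstack w j)‖ ^ 2 := by
  set ρ := specNorm A
  have hρ : 0 ≤ ρ := specNorm_nonneg A
  have hnorm : ‖toEuclideanLin (Hmat A E k) w‖ ≤
      ∑ j : Fin k, ρ ^ (k - 1 - (j : ℕ)) * ‖toEuclideanLin E (unstack w j)‖ := by
    rw [toEuclideanLin_Hmat_apply]
    refine (norm_sum_le _ _).trans (sum_le_sum fun j _ => ?_)
    rw [toLpLin_mul 2 2 2, LinearMap.comp_apply]
    exact (norm_toEuclideanLin_apply_le _ _).trans (by gcongr; exact specNorm_pow_le A _)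
  rw [← Fin.sum_sub_one_sub_eq_sum_range (ρ ^ ·)]
  refine (pow_le_pow_left₀ (norm_nonneg _) hnorm 2).trans ?_
  exact sum_sq_le_sum_mul_sum_of_sq_le_mul _ (fun j _ => by positivity)
    (fun j _ => by positivity) fun j _ => le_of_eq (by ring)

theorem sq_norm_toEuclideanLin_apply {ι κ : Type*} [Fintype ι] [Fintype κ] [DecidableEq κ]
    (M : Matrix ι κ ℝ) (x : EuclideanSpace ℝ κ) :
    ‖toEuclideanLin M x‖ ^ 2 = ∑ i, ∑ p, ∑ q, M i p * M i q * (x p * x q) := by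
  rw [EuclideanSpace.norm_sq_eq]
  simp only [Real.norm_eq_abs, sq_abs]
  simp only [toLpLin_apply, mulVec, dotProduct, sq, sum_mul_sum]
  exact sum_congr rfl fun i _ => sum_congr rfl fun p _ => sum_congr rfl fun q _ => by ring

theorem trace_mul_transpose_mul {ι κ : Type*} [Fintype ι] [Fintype κ] (C : Matrix κ κ ℝ)
    (M : Matrix ι κ ℝ) :
    trace (C * Mᵀ * M) = ∑ i, ∑ p, ∑ q, M i p * M i q * C p q := by
  simp only [trace, Matrix.diag, Matrix.mul_apply, transpose_apply, sum_mul]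
  rw [sum_comm]
  exact sum_congr rfl fun i _ => sum_congr rfl fun p _ => sum_congr rfl fun q _ => by ring

section SecondMoment

variable {Ω ι κ : Type*} [MeasurableSpace Ω] {μ : Measure Ω} [Fintype ι] [Fintype κ]
  [DecidableEq κ] {X : Ω → EuclideanSpace ℝ κ} {C : Matrix κ κ ℝ}

theorem integrable_sq_norm_toEuclideanLin_apply
    (hint : ∀ p q, Integrable (fun ω => X ω p * X ω q) μ) (M : Matrix ι κ ℝ) :
    Integrable (fun ω => ‖toEuclideanLin M (X ω)‖ ^ 2) μ := by
  simp only [sq_norm_toEuclideanLin_apply]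
  exact integrable_finsetSum _ fun i _ => integrable_finsetSum _ fun p _ =>
    integrable_finsetSum _ fun q _ => (hint p q).const_mul _

theorem integral_sq_norm_toEuclideanLin_apply
    (hint : ∀ p q, Integrable (fun ω => X ω p * X ω q) μ)
    (hcov : ∀ p q, ∫ ω, X ω p * X ω q ∂μ = C p q) (M : Matrix ι κ ℝ) :
    ∫ ω, ‖toEuclideanLin M (X ω)‖ ^ 2 ∂μ = trace (C * Mᵀ * M) := by
  simp only [sq_norm_toEuclideanLin_apply, trace_mul_transpose_mul]
  rw [integral_finsetSum _ fun i _ => integrable_finsetSum _ fun p _ =>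
    integrable_finsetSum _ fun q _ => (hint p q).const_mul _]
  refine sum_congr rfl fun i _ => ?_
  rw [integral_finsetSum _ fun p _ => integrable_finsetSum _ fun q _ => (hint p q).const_mul _]
  refine sum_congr rfl fun p _ => ?_
  rw [integral_finsetSum _ fun q _ => (hint p q).const_mul _]
  exact sum_congr rfl fun q _ => by rw [integral_const_mul, hcov]

end SecondMoment

theorem integral_sq_norm_toEuclideanLin_Hmat_le {nx nw k : ℕ} {Sw : Matrix (Fin nw) (Fin nw) ℝ}
    {P : Measure (EuclideanSpace ℝ (Fin k × Fin nw))}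
    (hP : P ∈ MomentSet ((1 : Matrix (Fin k) (Fin k) ℝ) ⊗ₖ Sw))
    (A : Matrix (Fin nx) (Fin nx) ℝ) (E : Matrix (Fin nx) (Fin nw) ℝ) :
    ∫ w, ‖toEuclideanLin (Hmat A E k) w‖ ^ 2 ∂P ≤
      (∑ j ∈ range k, specNorm A ^ j) ^ 2 * trace (Sw * Eᵀ * E) := by
  obtain ⟨-, -, -, hint, hcov⟩ := hP
  set ρ := specNorm A
  have hblock_int (j : Fin k) :
      Integrable (fun w => ‖toEuclideanLin E (unstack w j)‖ ^ 2) P :=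
    integrable_sq_norm_toEuclideanLin_apply (fun p q => hint (j, p) (j, q)) E
  have hblock (j : Fin k) :
      ∫ w, ‖toEuclideanLin E (unstack w j)‖ ^ 2 ∂P = trace (Sw * Eᵀ * E) :=
    integral_sq_norm_toEuclideanLin_apply (fun p q => hint (j, p) (j, q))
      (fun p q => by simp [unstack, hcov, kroneckerMap_apply]) E
  calc _ ≤ ∫ w, (∑ j ∈ range k, ρ ^ j) *
        ∑ j : Fin k, ρ ^ (k - 1 - (j : ℕ)) * ‖toEuclideanLin E (unstack w j)‖ ^ 2 ∂P :=
        integral_mono (integrable_sq_norm_toEuclideanLin_apply hint _)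
          ((integrable_finsetSum _ fun j _ => (hblock_int j).const_mul _).const_mul _)
          (sq_norm_toEuclideanLin_Hmat_apply_le A E k)
    _ = (∑ j ∈ range k, ρ ^ j) * ∑ j : Fin k, ρ ^ (k - 1 - (j : ℕ)) * trace (Sw * Eᵀ * E) := by
        rw [integral_const_mul, integral_finsetSum _ fun j _ => (hblock_int j).const_mul _]
        simp only [integral_const_mul, hblock]
    _ = _ := by rw [← sum_mul, Fin.sum_sub_one_sub_eq_sum_range (ρ ^ ·)]; ring

theorem integrable_sq_norm_add_toEuclideanLin {ι κ : Type*} [Fintype ι] [Fintype κ]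
    [DecidableEq κ] {S : Matrix κ κ ℝ} {P : Measure (EuclideanSpace ℝ κ)} (hP : P ∈ MomentSet S)
    (c : EuclideanSpace ℝ ι) (M : Matrix ι κ ℝ) :
    Integrable (fun ξ => ‖c + toEuclideanLin M ξ‖ ^ 2) P := by
  obtain ⟨hprob, -, -, hint, -⟩ := hP
  have hcont : Continuous fun ξ => c + toEuclideanLin M ξ :=
    continuous_const.add (LinearMap.continuous_of_finiteDimensional _)
  have hM : MemLp (fun ξ => toEuclideanLin M ξ) 2 P :=
    (memLp_two_iff_integrable_sq_norm
      (LinearMap.continuous_of_finiteDimensional _).aestronglyMeasurable).2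
      (integrable_sq_norm_toEuclideanLin_apply (X := id) hint M)
  exact (memLp_two_iff_integrable_sq_norm hcont.aestronglyMeasurable).1 ((memLp_const c).add hM)

theorem two_mul_mul_le_div_add_mul_sq {a y t : ℝ} (ht : 0 < t) :
    2 * a * y ≤ a ^ 2 / t + t * y ^ 2 := by
  rw [div_add' _ _ _ ht.ne', le_div_iff₀ ht]
  nlinarith [sq_nonneg (a - t * y)]

theorem le_sq_add_sqrt_of_forall_le {x a m : ℝ} (ha : 0 ≤ a) (hm : 0 ≤ m)
    (h : ∀ t > 0, x ≤ a ^ 2 + a ^ 2 / t + (1 + t) * m) : x ≤ (a + √m) ^ 2 := by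
  set v := √m
  have hv : 0 ≤ v := Real.sqrt_nonneg m
  have hmv : m = v ^ 2 := (Real.sq_sqrt hm).symm
  refine le_of_forall_pos_le_add fun η hη => ?_
  -- `t = a / v` would be optimal; `δ` keeps it positive and finite
  set δ := η / (a + v + 1)
  have hδ : 0 < δ := by positivity
  have hδη : δ * (a + v) ≤ η := by
    rw [div_mul_eq_mul_div, div_le_iff₀ (by positivity)]
    nlinarith
  have h1 : a ^ 2 / ((a + δ) / (v + δ)) ≤ a * (v + δ) := by
    rw [div_div_eq_mul_div, div_le_iff₀ (by positivity)]
    nlinarith [mul_nonneg (mul_nonneg ha (by positivity : 0 ≤ v + δ)) hδ.le]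
  have h2 : (a + δ) / (v + δ) * v ^ 2 ≤ (a + δ) * v := by
    rw [div_mul_eq_mul_div, div_le_iff₀ (by positivity)]
    nlinarith [mul_nonneg (mul_nonneg (by positivity : 0 ≤ a + δ) hv) hδ.le]
  have := h ((a + δ) / (v + δ)) (by positivity)
  rw [hmv] at this
  nlinarith

theorem integral_le_CVaR_objective {Ω : Type*} [MeasurableSpace Ω] {μ : Measure Ω}
    [IsProbabilityMeasure μ] {ε : ℝ} {L : Ω → ℝ} (hε0 : 0 < ε) (hε1 : ε ≤ 1)
    (hL : Integrable L μ) (β : ℝ) :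
    ∫ ξ, L ξ ∂μ ≤ β + ε⁻¹ * ∫ ξ, max (L ξ - β) 0 ∂μ := by
  have hpos := (hL.sub (integrable_const β)).pos_part
  have hmean : ∫ ξ, L ξ ∂μ - β ≤ ∫ ξ, max (L ξ - β) 0 ∂μ :=
    calc ∫ ξ, L ξ ∂μ - β = ∫ ξ, (L ξ - β) ∂μ := by
          rw [integral_sub hL (integrable_const β), integral_const, probReal_univ, one_smul]
      _ ≤ _ := integral_mono (hL.sub (integrable_const β)) hpos fun ξ => le_max_left _ _
  have hnonneg : 0 ≤ ∫ ξ, max (L ξ - β) 0 ∂μ := integral_nonneg fun ξ => le_max_right _ _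
  have hinv : 1 ≤ ε⁻¹ := one_le_inv₀ hε0 |>.2 hε1
  nlinarith

section CVaR

variable {ι : Type*} [Fintype ι] {P : Measure (EuclideanSpace ℝ ι)} [IsProbabilityMeasure P]
  {ε : ℝ} {L : EuclideanSpace ℝ ι → ℝ}

theorem CVaR_le_objective (hε0 : 0 < ε) (hε1 : ε ≤ 1) (hL : Integrable L P) (β : ℝ) :
    CVaR ε P L ≤ β + ε⁻¹ * ∫ ξ, max (L ξ - β) 0 ∂P :=
  ciInf_le ⟨_, Set.forall_mem_range.2 (integral_le_CVaR_objective hε0 hε1 hL)⟩ β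

theorem CVaR_le_of_le_sq_add (hε0 : 0 < ε) (hε1 : ε ≤ 1) (hL : Integrable L P)
    {Y : EuclideanSpace ℝ ι → ℝ} (hY : Integrable (fun ξ => Y ξ ^ 2) P) {a d : ℝ}
    (hLY : ∀ ξ, L ξ ≤ (a + Y ξ) ^ 2 - d) {t : ℝ} (ht : 0 < t) :
    CVaR ε P L ≤ a ^ 2 + a ^ 2 / t + (1 + t) * (ε⁻¹ * ∫ ξ, Y ξ ^ 2 ∂P) - d := by
  have hexcess (ξ) : max (L ξ - (a ^ 2 + a ^ 2 / t - d)) 0 ≤ (1 + t) * Y ξ ^ 2 := by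
    have := two_mul_mul_le_div_add_mul_sq (a := a) (y := Y ξ) ht
    exact max_le (by nlinarith [hLY ξ]) (by positivity)
  have hint : ∫ ξ, max (L ξ - (a ^ 2 + a ^ 2 / t - d)) 0 ∂P ≤ (1 + t) * ∫ ξ, Y ξ ^ 2 ∂P := by
    rw [← integral_const_mul]
    exact integral_mono_of_nonneg (.of_forall fun ξ => le_max_right _ _) (hY.const_mul _)
      (.of_forall hexcess)
  calc _ ≤ _ := CVaR_le_objective hε0 hε1 hL (a ^ 2 + a ^ 2 / t - d)
    _ ≤ _ := by
      have := mul_le_mul_of_nonneg_left hint (inv_nonneg.2 hε0.le)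
      linarith

theorem CVaR_le_sq_add_sqrt (hε0 : 0 < ε) (hε1 : ε ≤ 1) (hL : Integrable L P)
    {Y : EuclideanSpace ℝ ι → ℝ} (hY : Integrable (fun ξ => Y ξ ^ 2) P) {a d : ℝ} (ha : 0 ≤ a)
    (hLY : ∀ ξ, L ξ ≤ (a + Y ξ) ^ 2 - d) :
    CVaR ε P L ≤ (a + √(ε⁻¹ * ∫ ξ, Y ξ ^ 2 ∂P)) ^ 2 - d := by
  have hm : 0 ≤ ε⁻¹ * ∫ ξ, Y ξ ^ 2 ∂P :=
    mul_nonneg (inv_nonneg.2 hε0.le) (integral_nonneg fun ξ => sq_nonneg _)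
  have := le_sq_add_sqrt_of_forall_le ha hm fun t ht =>
    le_sub_iff_add_le.1 (CVaR_le_of_le_sq_add hε0 hε1 hL hY hLY ht)
  linarith

end CVaR

theorem CVaR_sq_norm_add_Hmat_le {nx nw k : ℕ} {ε : ℝ} (hε0 : 0 < ε) (hε1 : ε ≤ 1)
    {Sw : Matrix (Fin nw) (Fin nw) ℝ} {P : Measure (EuclideanSpace ℝ (Fin k × Fin nw))}
    (hP : P ∈ MomentSet ((1 : Matrix (Fin k) (Fin k) ℝ) ⊗ₖ Sw))
    (A : Matrix (Fin nx) (Fin nx) ℝ) (E : Matrix (Fin nx) (Fin nw) ℝ)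
    {c : EuclideanSpace ℝ (Fin nx)} {a : ℝ} (ha : 0 ≤ a) (hc : ‖c‖ ≤ a) (d : ℝ) :
    CVaR ε P (fun w => ‖c + toEuclideanLin (Hmat A E k) w‖ ^ 2 - d) ≤
      (a + (∑ j ∈ range k, specNorm A ^ j) * √(ε⁻¹ * trace (Sw * Eᵀ * E))) ^ 2 - d := by
  have : IsProbabilityMeasure P := hP.1
  set G := ∑ j ∈ range k, specNorm A ^ j
  set H := toEuclideanLin (Hmat A E k)
  have hG : 0 ≤ G := sum_nonneg fun j _ => pow_nonneg (specNorm_nonneg A) j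
  have hH : ∫ w, ‖H w‖ ^ 2 ∂P ≤ G ^ 2 * trace (Sw * Eᵀ * E) :=
    integral_sq_norm_toEuclideanLin_Hmat_le hP A E
  have hm : √(ε⁻¹ * ∫ w, ‖H w‖ ^ 2 ∂P) ≤ G * √(ε⁻¹ * trace (Sw * Eᵀ * E)) :=
    calc _ ≤ √(G ^ 2 * (ε⁻¹ * trace (Sw * Eᵀ * E))) := Real.sqrt_le_sqrt
          ((mul_le_mul_of_nonneg_left hH (inv_nonneg.2 hε0.le)).trans_eq (by ring))
      _ = _ := by rw [Real.sqrt_mul (sq_nonneg G), Real.sqrt_sq hG]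
  have hLY (w) : ‖c + H w‖ ^ 2 - d ≤ (a + ‖H w‖) ^ 2 - d := by
    gcongr
    exact (norm_add_le _ _).trans (by linarith)
  calc _ ≤ (a + √(ε⁻¹ * ∫ w, ‖H w‖ ^ 2 ∂P)) ^ 2 - d :=
        CVaR_le_sq_add_sqrt hε0 hε1
          ((integrable_sq_norm_add_toEuclideanLin hP c _).sub (integrable_const _))
          (integrable_sq_norm_toEuclideanLin_apply (X := id) hP.2.2.2.1 _) ha hLY
    _ ≤ _ := by gcongr

theorem pow_mul_add_geom_sum_mul_le {ρ b R : ℝ} (hρ : 0 ≤ ρ) (h : b ≤ (1 - ρ) * R) (k : ℕ) :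
    ρ ^ k * R + (∑ j ∈ range k, ρ ^ j) * b ≤ R := by
  have hgeom := geom_sum_mul ρ k
  have hb := mul_le_mul_of_nonneg_left h (sum_nonneg fun j _ => pow_nonneg hρ j :
    0 ≤ ∑ j ∈ range k, ρ ^ j)
  linear_combination hb - R * hgeom

theorem mul_add_sqrt_le_of_le_inv_mul {ρ b σ q r : ℝ} (hρ : ρ < 1) (hb : 0 ≤ b)
    (hr : ((1 - ρ) ^ 2)⁻¹ * q < r ^ 2) (hσ : σ ≤ b⁻¹ * ((1 - ρ) * r - √q)) :
    b * σ + √q ≤ (1 - ρ) * |r| := by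
  have h1ρ : 0 < 1 - ρ := sub_pos.2 hρ
  have hq : √q ≤ (1 - ρ) * |r| := by
    have : q ≤ ((1 - ρ) * |r|) ^ 2 := by
      rw [mul_pow, sq_abs]; exact ((inv_mul_lt_iff₀ (by positivity)).1 hr).le
    exact (Real.sqrt_le_sqrt this).trans_eq (Real.sqrt_sq (by positivity))
  rcases hb.eq_or_lt with rfl | hb
  · simpa using hq
  · have := (le_inv_mul_iff₀ hb).1 hσ
    nlinarith [le_abs_self r]

theorem stmt19_general {nx nu nw : ℕ} (ε : ℝ) (hε : ε ∈ Set.Ioo (0 : ℝ) 1)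
    (A : Matrix (Fin nx) (Fin nx) ℝ) (B : Matrix (Fin nx) (Fin nu) ℝ)
    (K : Matrix (Fin nu) (Fin nx) ℝ) (E : Matrix (Fin nx) (Fin nw) ℝ)
    (Sw : Matrix (Fin nw) (Fin nw) ℝ)
    (hA : specNorm (A + B * K) < 1)
    (r σ₃ : ℝ)
    (hr2 : ((1 - specNorm (A + B * K)) ^ 2)⁻¹ *
      (ε⁻¹ * Matrix.trace (Sw * Eᵀ * E)) < r ^ 2)
    (hσ₃0 : 0 ≤ σ₃)
    (hσ₃ : σ₃ ≤ (specNorm (B * K))⁻¹ *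
      ((1 - specNorm (A + B * K)) * r -
        Real.sqrt (ε⁻¹ * Matrix.trace (Sw * Eᵀ * E)))) :
    ∀ x : EuclideanSpace ℝ (Fin nx), ‖x‖ ^ 2 ≤ r ^ 2 → ∀ k : ℕ, 1 ≤ k →
      ∀ e : ℕ → EuclideanSpace ℝ (Fin nx), (∀ τ, ‖e τ‖ ≤ σ₃) →
      wcCVaR ε ((1 : Matrix (Fin k) (Fin k) ℝ) ⊗ₖ Sw)
        (fun w => ‖Matrix.toEuclideanLin ((A + B * K) ^ k) x +
          (∑ j ∈ Finset.range k,
            Matrix.toEuclideanLin ((A + B * K) ^ j * (B * K)) (e (k - 1 - j))) +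
          Matrix.toEuclideanLin (Hmat (A + B * K) E k) w‖ ^ 2 - r ^ 2) ≤ 0 := by
  intro x hx k _ e he
  set ρ := specNorm (A + B * K)
  set G := ∑ j ∈ range k, ρ ^ j
  set a := ρ ^ k * |r| + specNorm (B * K) * σ₃ * G
  have hρ : 0 ≤ ρ := specNorm_nonneg _
  have ha : 0 ≤ a := by have := specNorm_nonneg (B * K); positivity
  have hx' : ‖x‖ ≤ |r| := by simpa using sq_le_sq.1 hx
  have hc := (norm_pow_apply_add_sum_le (A + B * K) (B * K) x e he k).trans
    (add_le_add_left (mul_le_mul_of_nonneg_left hx' (pow_nonneg hρ k)) _)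
  have hbudget : a + G * √(ε⁻¹ * trace (Sw * Eᵀ * E)) ≤ |r| := by
    have := pow_mul_add_geom_sum_mul_le hρ
      (mul_add_sqrt_le_of_le_inv_mul hA (specNorm_nonneg _) hr2 hσ₃) k
    linarith
  refine Real.iSup_le (fun ⟨P, hP⟩ => ?_) le_rfl
  refine (CVaR_sq_norm_add_Hmat_le hε.1 hε.2.le hP (A + B * K) E ha hc _).trans ?_
  rw [sub_nonpos, ← sq_abs r]
  exact pow_le_pow_left₀ (by positivity) hbudget 2

/-- Corollary 3: event-triggered positive invariance with a state-error
threshold, for the closed loop `x_{t+1} = (A+BK) x_t + BK e_t + E w_t` with `‖e_t‖ ≤ σ₃`. -/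
theorem stmt19 {nx nu nw : ℕ} (ε : ℝ) (hε : ε ∈ Set.Ioo (0 : ℝ) 1)
    (A : Matrix (Fin nx) (Fin nx) ℝ) (B : Matrix (Fin nx) (Fin nu) ℝ)
    (K : Matrix (Fin nu) (Fin nx) ℝ) (E : Matrix (Fin nx) (Fin nw) ℝ)
    (Sw : Matrix (Fin nw) (Fin nw) ℝ)
    (hA : specNorm (A + B * K) < 1) (hSw : Sw.PosSemidef)
    (r σ₃ : ℝ)
    (hr2 : ((1 - specNorm (A + B * K)) ^ 2)⁻¹ *
      (ε⁻¹ * Matrix.trace (Sw * Eᵀ * E)) < r ^ 2)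
    (hσ₃0 : 0 ≤ σ₃)
    (hσ₃ : σ₃ ≤ (specNorm (B * K))⁻¹ *
      ((1 - specNorm (A + B * K)) * r -
        Real.sqrt (ε⁻¹ * Matrix.trace (Sw * Eᵀ * E)))) :
    ∀ x : EuclideanSpace ℝ (Fin nx), ‖x‖ ^ 2 ≤ r ^ 2 → ∀ k : ℕ, 1 ≤ k →
      ∀ e : ℕ → EuclideanSpace ℝ (Fin nx), (∀ τ, ‖e τ‖ ≤ σ₃) →
      wcCVaR ε ((1 : Matrix (Fin k) (Fin k) ℝ) ⊗ₖ Sw)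
        (fun w => ‖Matrix.toEuclideanLin ((A + B * K) ^ k) x +
          (∑ j ∈ Finset.range k,
            Matrix.toEuclideanLin ((A + B * K) ^ j * (B * K)) (e (k - 1 - j))) +
          Matrix.toEuclideanLin (Hmat (A + B * K) E k) w‖ ^ 2 - r ^ 2) ≤ 0 :=
  stmt19_general ε hε A B K E Sw hA r σ₃ hr2 hσ₃0 hσ₃
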